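/- For every plane binary tree t with n(t) ≥ 3 leaves, the number of root configurations satisfies c(t) ≥ 2^{ch(t)}, where ch(t) is the number of cherries of t. -/
import Mathlib


/-- Plane binary trees: a leaf, or an ordered pair of plane binary trees. -/
inductive PTree : Type where
  | leaf : PTree
  | node : PTree → PTree → PTree
deriving DecidableEq

namespace PTree

/-- Number of leaves of a plane binary tree. -/
def leaves : PTree → ℕ
  | leaf => 1
  | node l r => leaves l + leaves r

/-- Number of root ancestral configurations:
`c(leaf) = 0`, `c(node l r) = (c l + 1) * (c r + 1)`. -/
def c : PTree → ℕ
  | leaf => 0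
  | node l r => (c l + 1) * (c r + 1)

/-- The finite set of plane binary trees with `n` leaves. -/
def trees : ℕ → Finset PTree
  | 0 => ∅
  | 1 => {leaf}
  | (n+2) =>
      (Finset.Icc 1 (n+1)).attach.biUnion fun j =>
        ((trees j.1) ×ˢ (trees (n+2-j.1))).image fun p => node p.1 p.2
decreasing_by
  · have h := Finset.mem_Icc.mp j.2; omega
  · have h := Finset.mem_Icc.mp j.2; omega

end PTree

namespace PTree

/-- Number of cherries: internal nodes both of whose children are leaves. -/
def cherries : PTree → ℕ
  | leaf => 0
  | node leaf leaf => 1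
  | node l r => cherries l + cherries r

end PTree

lemma aux_two_pow_cherries_le_c_succ (t : PTree) : 2 ^ t.cherries ≤ t.c + 1 := by
  induction t with
  | leaf => simp [PTree.cherries, PTree.c]
  | node l r ihl ihr =>
    match l, r with
    | .leaf, .leaf => simp [PTree.cherries, PTree.c]
    | .leaf, .node a b =>
      simp only [PTree.cherries, PTree.c, pow_add]
      calc 2 ^ PTree.leaf.cherries * 2 ^ (PTree.node a b).cherries
          ≤ (PTree.leaf.c + 1) * ((PTree.node a b).c + 1) := Nat.mul_le_mul ihl ihr
        _ ≤ _ := Nat.le_succ _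
    | .node a b, .leaf =>
      simp only [PTree.cherries, PTree.c, pow_add]
      calc 2 ^ (PTree.node a b).cherries * 2 ^ PTree.leaf.cherries
          ≤ ((PTree.node a b).c + 1) * (PTree.leaf.c + 1) := Nat.mul_le_mul ihl ihr
        _ ≤ _ := Nat.le_succ _
    | .node a b, .node d e =>
      simp only [PTree.cherries, PTree.c, pow_add]
      calc 2 ^ (PTree.node a b).cherries * 2 ^ (PTree.node d e).cherries
          ≤ ((PTree.node a b).c + 1) * ((PTree.node d e).c + 1) := Nat.mul_le_mul ihl ihr
        _ ≤ _ := Nat.le_succ _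

/-- Every plane binary tree with at least `3` leaves satisfies `c(t) ≥ 2^{ch(t)}`. -/
theorem two_pow_cherries_le_c (t : PTree) (ht : 3 ≤ t.leaves) :
    2 ^ t.cherries ≤ t.c := by
  match t with
  | .leaf => simp [PTree.leaves] at ht
  | .node .leaf .leaf => simp [PTree.leaves] at ht
  | .node .leaf (.node a b) =>
    simp only [PTree.cherries, PTree.c, pow_add]
    exact Nat.mul_le_mul (by norm_num) (aux_two_pow_cherries_le_c_succ _)
  | .node (.node a b) .leaf =>
    simp only [PTree.cherries, PTree.c, pow_add]
    exact Nat.mul_le_mul (aux_two_pow_cherries_le_c_succ _) (by norm_num)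
  | .node (.node a b) (.node d e) =>
    simp only [PTree.cherries, PTree.c, pow_add]
    exact Nat.mul_le_mul (aux_two_pow_cherries_le_c_succ _) (aux_two_pow_cherries_le_c_succ _)
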